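/- Every K-derivation d of the Lie algebra L = E_∞ can be written as d = ad(z) + d' where z ∈ L and d' is a K-derivation of L satisfying d'((1, 0, 0, 0)) ∈ Z(L). -/

import Mathlib

/- Purely even case of the paper's super setting: K a commutative unital ring
containing 1/2, A a commutative unital associative K-algebra, M an A-module
(hence also a K-module), q : M × M → A a symmetric A-bilinear form. -/

variable {K A M : Type*} [CommRing K] [Invertible (2 : K)] [CommRing A] [Algebra K A]
  [AddCommGroup M] [Module A M] [Module K M] [IsScalarTower K A M]
  [SMulCommClass A K M] [SMulCommClass K A M]

variable (K) in
/-- `a·id_M`, viewed as a `K`-linear endomorphism of `M`. -/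
def aId (a : A) : Module.End K M := a • (1 : Module.End K M)

variable (K) in
/-- `E_{m,n}(p) = q(n,p)·m − q(m,p)·n`, viewed as a `K`-linear endomorphism of `M`. -/
noncomputable def EmapK (q : M →ₗ[A] M →ₗ[A] A) (m n : M) : Module.End K M :=
  ((q n).restrictScalars K).smulRight m - ((q m).restrictScalars K).smulRight n

variable (K) in
/-- `osp(q)`, realized inside `End_K(M)`: the set of `A`-linear endomorphisms `x`
of `M` with `q(x(m),n) + q(x(n),m) = 0` for all `m, n`. -/
def ospK (q : M →ₗ[A] M →ₗ[A] A) : Set (Module.End K M) :=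
  {x | (∀ (a : A) (p : M), x (a • p) = a • x p) ∧
       ∀ m n : M, q (x m) n + q (x n) m = 0}

variable (K) in
/-- `eosp(q)`: the additive subgroup generated by the `E_{m,n}`. -/
noncomputable def eospK (q : M →ₗ[A] M →ₗ[A] A) : AddSubgroup (Module.End K M) :=
  AddSubgroup.closure {f | ∃ m n : M, f = EmapK K q m n}

variable (K) in
/-- The bracket on `E_∞ = A × M × M × E`, where `E` is a Lie subalgebra of
`osp(q)` containing `eosp(q)` (given as a `K`-submodule of `End_K(M)` closed
under commutators and containing all `E_{m,n}`):
`[(a,m,n,x),(a',m',n',x')] = (q(m,n') − q(n,m'),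
  a·m' + x(m') − a'·m − x'(m), −a·n' + x(n') + a'·n − x'(n),
  E_{m,n'} + E_{n,m'} + [x,x'])`. -/
noncomputable def brEinf (q : M →ₗ[A] M →ₗ[A] A) (E : Submodule K (Module.End K M))
    (hEe : ∀ m n : M, EmapK K q m n ∈ E)
    (hbr : ∀ x ∈ E, ∀ y ∈ E, x * y - y * x ∈ E)
    (u v : A × M × M × E) : A × M × M × E :=
  (q u.2.1 v.2.2.1 - q u.2.2.1 v.2.1,
   u.1 • v.2.1 + (u.2.2.2 : Module.End K M) v.2.1 - v.1 • u.2.1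
     - (v.2.2.2 : Module.End K M) u.2.1,
   -(u.1 • v.2.2.1) + (u.2.2.2 : Module.End K M) v.2.2.1 + v.1 • u.2.2.1
     - (v.2.2.2 : Module.End K M) u.2.2.1,
   ⟨EmapK K q u.2.1 v.2.2.1 + EmapK K q u.2.2.1 v.2.1 +
      ((u.2.2.2 : Module.End K M) * (v.2.2.2 : Module.End K M)
        - (v.2.2.2 : Module.End K M) * (u.2.2.2 : Module.End K M)),
    add_mem (add_mem (hEe _ _) (hEe _ _)) (hbr _ u.2.2.2.2 _ v.2.2.2.2)⟩)

/-!
Let `e = (1, 0, 0, 0)`; `ad e` acts on `E_∞ = A × M × M × E` by `(a, m, n, x) ↦ (0, m, -n, 0)`.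
Subtracting from `d` the inner derivation of the odd element `z = (0, -m₀, n₀, 0)`, where
`d e = (a₀, m₀, n₀, x₀)`, gives a derivation `d'` with `d' e = (a₀, 0, 0, x₀)`. The Leibniz rule
applied to `[e, (0, m, 0, 0)] = (0, m, 0, 0)`, `[(0, 0, n, 0), e] = (0, 0, n, 0)` and
`[(0, 0, 0, x), e] = 0`, read off in the component where `ad e` acts as the identity
(resp. as zero), shows that `a₀ + x₀` kills the first copy of `M`, `a₀ - x₀` kills the second,
and `x₀` commutes with `E`: exactly what makes `d' e` central.
-/

section

variable {q : M →ₗ[A] M →ₗ[A] A} {E : Submodule K (Module.End K M)}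
  {hEe : ∀ m n : M, EmapK K q m n ∈ E} {hbr : ∀ x ∈ E, ∀ y ∈ E, x * y - y * x ∈ E}

local notation "⁅" u ", " v "⁆ₑ" => brEinf K q E hEe hbr u v

local notation "𝟏" => ((1 : A), (0 : M), (0 : M), (0 : E))

theorem EmapK_apply (m n p : M) : EmapK K q m n p = q n p • m - q m p • n := rfl

theorem einf_ext {u v : A × M × M × E} (h₁ : u.1 = v.1) (h₂ : u.2.1 = v.2.1)
    (h₃ : u.2.2.1 = v.2.2.1)
    (h₄ : ∀ p, (u.2.2.2 : Module.End K M) p = (v.2.2.2 : Module.End K M) p) : u = v :=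
  Prod.ext h₁ (Prod.ext h₂ (Prod.ext h₃ (Subtype.ext (LinearMap.ext h₄))))

theorem brEinf_add_right (z u v : A × M × M × E) : ⁅z, u + v⁆ₑ = ⁅z, u⁆ₑ + ⁅z, v⁆ₑ := by
  refine einf_ext ?_ ?_ ?_ fun p => ?_ <;>
    simp only [brEinf, Prod.fst_add, Prod.snd_add, Submodule.coe_add, map_add, smul_add,
      add_smul, LinearMap.sub_apply, LinearMap.add_apply, Module.End.mul_apply, EmapK_apply] <;>
    module

theorem brEinf_smul_right (k : K) (z u : A × M × M × E) : ⁅z, k • u⁆ₑ = k • ⁅z, u⁆ₑ := by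
  refine einf_ext ?_ ?_ ?_ fun p => ?_ <;>
    simp only [brEinf, Prod.smul_fst, Prod.smul_snd, SetLike.val_smul, map_smul,
      LinearMap.map_smul_of_tower, smul_sub, smul_add, smul_assoc, LinearMap.smul_apply,
      LinearMap.sub_apply, LinearMap.add_apply, Module.End.mul_apply, EmapK_apply] <;>
    module

theorem brEinf_sub_left (u v w : A × M × M × E) : ⁅u - v, w⁆ₑ = ⁅u, w⁆ₑ - ⁅v, w⁆ₑ := by
  refine einf_ext ?_ ?_ ?_ fun p => ?_ <;>
    simp only [brEinf, Prod.fst_sub, Prod.snd_sub, AddSubgroupClass.coe_sub, map_sub, smul_sub,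
      sub_smul, LinearMap.sub_apply, LinearMap.add_apply, Module.End.mul_apply, EmapK_apply] <;>
    module

theorem isLinearMap_brEinf (z : A × M × M × E) : IsLinearMap K (⁅z, ·⁆ₑ) :=
  ⟨brEinf_add_right z, fun k u => brEinf_smul_right k z u⟩

theorem brEinf_sub_right (u v w : A × M × M × E) : ⁅u, v - w⁆ₑ = ⁅u, v⁆ₑ - ⁅u, w⁆ₑ :=
  (isLinearMap_brEinf u).map_sub v w

theorem brEinf_jacobi (hq : ∀ m n : M, q m n = q n m)
    (hEo : (E : Set (Module.End K M)) ⊆ ospK K q) (z u v : A × M × M × E) :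
    ⁅z, ⁅u, v⁆ₑ⁆ₑ = ⁅⁅z, u⁆ₑ, v⁆ₑ + ⁅u, ⁅z, v⁆ₑ⁆ₑ := by
  obtain ⟨a, m, n, x, hx⟩ := z
  obtain ⟨a₁, m₁, n₁, x₁, hx₁⟩ := u
  obtain ⟨a₂, m₂, n₂, x₂, hx₂⟩ := v
  have adjoint : ∀ y ∈ E, ∀ p p' : M, q (y p) p' = -q p (y p') := fun y hy p p' => by
    linear_combination (hEo hy).2 p p' - hq (y p') p
  have swap : ∀ y ∈ E, ∀ p p' : M, q p (y p') = -q p' (y p) := fun y hy p p' => by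
    rw [hq, adjoint y hy]
  have alin : ∀ y ∈ E, ∀ (c : A) (p : M), y (c • p) = c • y p := fun y hy => (hEo hy).1
  refine einf_ext ?_ ?_ ?_ fun p => ?_
  all_goals simp only [brEinf, Prod.fst_add, Prod.snd_add, Submodule.coe_add, map_add, map_sub,
    map_neg, map_smul, adjoint _ hx, adjoint _ hx₁, adjoint _ hx₂, alin _ hx, alin _ hx₁,
    alin _ hx₂, smul_eq_mul, LinearMap.add_apply, LinearMap.sub_apply, LinearMap.smul_apply,
    LinearMap.neg_apply, Module.End.mul_apply, EmapK_apply]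
  · linear_combination -swap _ hx₂ m n₁ + swap _ hx₂ n m₁ + a₂ * hq m n₁ + a₂ * hq n m₁
  all_goals match_scalars <;> (try simp only [hq]) <;> ring

variable (q E hEe hbr) in
def IsEinfDerivation (d : A × M × M × E → A × M × M × E) : Prop :=
  IsLinearMap K d ∧ ∀ u v, d ⁅u, v⁆ₑ = ⁅d u, v⁆ₑ + ⁅u, d v⁆ₑ

theorem isEinfDerivation_brEinf (hq : ∀ m n : M, q m n = q n m)
    (hEo : (E : Set (Module.End K M)) ⊆ ospK K q) (z : A × M × M × E) :
    IsEinfDerivation q E hEe hbr (⁅z, ·⁆ₑ) :=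
  ⟨isLinearMap_brEinf z, brEinf_jacobi hq hEo z⟩

theorem IsEinfDerivation.sub {d d' : A × M × M × E → A × M × M × E}
    (hd : IsEinfDerivation q E hEe hbr d) (hd' : IsEinfDerivation q E hEe hbr d') :
    IsEinfDerivation q E hEe hbr (fun u => d u - d' u) := by
  refine ⟨(IsLinearMap.mk' d hd.1 - IsLinearMap.mk' d' hd'.1).isLinear, fun u v => ?_⟩
  simp only [hd.2, hd'.2, brEinf_sub_left, brEinf_sub_right]
  abel

theorem brEinf_unit_left (w : A × M × M × E) : ⁅𝟏, w⁆ₑ = (0, w.2.1, -w.2.2.1, 0) := by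
  refine einf_ext ?_ ?_ ?_ fun p => ?_ <;> simp [brEinf, EmapK_apply]

theorem brEinf_unit_right (w : A × M × M × E) : ⁅w, 𝟏⁆ₑ = (0, -w.2.1, w.2.2.1, 0) := by
  refine einf_ext ?_ ?_ ?_ fun p => ?_ <;> simp [brEinf, EmapK_apply]

namespace IsEinfDerivation

variable {d : A × M × M × E → A × M × M × E}

theorem unit_smul_add_apply (hd : IsEinfDerivation q E hEe hbr d) (p : M) :
    (d 𝟏).1 • p + ((d 𝟏).2.2.2 : Module.End K M) p = 0 := by
  have h := hd.2 𝟏 (0, p, 0, 0)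
  simp only [brEinf_unit_left, neg_zero] at h
  simpa [brEinf] using congrArg (fun w => w.2.1) h

theorem unit_smul_sub_apply (hd : IsEinfDerivation q E hEe hbr d) (p : M) :
    (d 𝟏).1 • p - ((d 𝟏).2.2.2 : Module.End K M) p = 0 := by
  have h := hd.2 (0, 0, p, 0) 𝟏
  simp only [brEinf_unit_right, neg_zero] at h
  simpa [brEinf] using congrArg (fun w => w.2.2.1) h

theorem unit_commute (hd : IsEinfDerivation q E hEe hbr d) (x : E) :
    Commute ((d 𝟏).2.2.2 : Module.End K M) x := by
  have hx : ⁅(0, 0, 0, x), 𝟏⁆ₑ = 0 := by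
    simp only [brEinf_unit_right, neg_zero]
    rfl
  have h := hd.2 (0, 0, 0, x) 𝟏
  rw [hx, hd.1.map_zero, brEinf_unit_right] at h
  have h' := congrArg (fun w => (w.2.2.2 : Module.End K M)) h
  simp only [Prod.snd_zero, ZeroMemClass.coe_zero, brEinf, map_zero, LinearMap.zero_apply,
    sub_self, zero_smul, zero_add, smul_zero, sub_zero, neg_zero, add_zero, EmapK,
    LinearMap.smulRight_zero, LinearMap.restrictScalars_zero, LinearMap.zero_smulRight,
    Prod.mk_add_mk] at h'
  exact (sub_eq_zero.mp h'.symm).symm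

theorem brEinf_apply_unit_eq_zero (hd : IsEinfDerivation q E hEe hbr d)
    (hm : (d 𝟏).2.1 = 0) (hn : (d 𝟏).2.2.1 = 0) (w : A × M × M × E) : ⁅d 𝟏, w⁆ₑ = 0 := by
  refine einf_ext ?_ ?_ ?_ fun p => ?_ <;>
    simp only [brEinf, hm, hn, map_zero, LinearMap.zero_apply, smul_zero, sub_zero, add_zero,
      Prod.fst_zero, Prod.snd_zero, ZeroMemClass.coe_zero]
  · exact hd.unit_smul_add_apply w.2.1
  · rw [neg_add_eq_sub, ← neg_sub, hd.unit_smul_sub_apply, neg_zero]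
  · simp [EmapK_apply, (hd.unit_commute w.2.2.2).eq]

end IsEinfDerivation

end

/-- every `K`-derivation `d` of `L = E_∞` can be written as
`d = ad(z) + d'` with `z ∈ L` and `d'` a `K`-derivation of `L` such that
`d'((1,0,0,0))` lies in the centre `Z(L)`. -/
theorem stmt7 (q : M →ₗ[A] M →ₗ[A] A) (hq : ∀ m n : M, q m n = q n m)
    (E : Submodule K (Module.End K M))
    (hEe : ∀ m n : M, EmapK K q m n ∈ E)
    (hEo : (E : Set (Module.End K M)) ⊆ ospK K q)
    (hbr : ∀ x ∈ E, ∀ y ∈ E, x * y - y * x ∈ E) :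
    ∀ d : (A × M × M × E) → (A × M × M × E), IsLinearMap K d →
      (∀ u v, d (brEinf K q E hEe hbr u v)
          = brEinf K q E hEe hbr (d u) v + brEinf K q E hEe hbr u (d v)) →
      ∃ (z : A × M × M × E) (d' : (A × M × M × E) → (A × M × M × E)),
        IsLinearMap K d' ∧
        (∀ u v, d' (brEinf K q E hEe hbr u v)
            = brEinf K q E hEe hbr (d' u) v + brEinf K q E hEe hbr u (d' v)) ∧
        (∀ u, d u = brEinf K q E hEe hbr z u + d' u) ∧
        (∀ w, brEinf K q E hEe hbr (d' ((1 : A), (0 : M), (0 : M), (0 : E))) w = 0) := by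
  intro d hd hder
  set e : A × M × M × E := (1, 0, 0, 0)
  set z : A × M × M × E := (0, -(d e).2.1, (d e).2.2.1, 0)
  have hd' := IsEinfDerivation.sub ⟨hd, hder⟩ (isEinfDerivation_brEinf hq hEo z)
  refine ⟨z, _, hd'.1, hd'.2, fun u => (add_sub_cancel _ _).symm,
    hd'.brEinf_apply_unit_eq_zero ?_ ?_⟩
  all_goals simp [e, z, brEinf_unit_right]
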